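/- Let I be a countable index set, let (q_i)_{i∈I} be a family of (not necessarily distinct) primes, and let G = ⨁_{i∈I} ℤ/q_iℤ. Let X be an ergodic G-system and let F : X → S¹ be a phase polynomial of degree < k. Let n = p₁ ⋯ p_j be a product of j distinct primes each strictly greater than k, and suppose F(x)^n = 1 for μ-a.e. x. Then for every g ∈ G, the product ∏_{t=0}^{n−1} F(T_g^t x) equals 1 for μ-a.e. x. -/

import Mathlib

/-!
Along the orbit of a single `T_g`, the discrete Taylor formula expands `F(T_g^t x)` as
`∏_{m<k} (Δ^m F)(x)^(t choose m)`, where `Δ` is the derivative along `T_g`; since `F` has degree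
`< k`, `Δ^k F = 1` a.e. By the hockey-stick identity the product over `t < n` is then
`∏_{m<k} (Δ^m F)(x)^(n choose (m+1))`. Every `Δ^m F` is an `n`-th root of unity because `F` is,
and `n ∣ n choose (m+1)` because `n` is coprime to `m + 1 ≤ k`.
-/

open MeasureTheory
open scoped symmDiff

noncomputable instance : MeasurableSpace Circle := borel Circle
instance : BorelSpace Circle := ⟨rfl⟩

/-- `φ : X → H` is a phase polynomial of degree `< k` with respect to the action `T` of `G`
on the measure space `(X, μ)`: all `k`-fold multiplicative derivatives
`Δ_{h₁} ⋯ Δ_{h_k} φ` equal `1` almost everywhere, where `Δ_g φ = (φ ∘ T_g) · φ⁻¹`. -/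
def PhasePoly {G X H : Type*} [MeasurableSpace X] [CommGroup H]
    (T : G → X → X) (μ : Measure X) : ℕ → (X → H) → Prop
  | 0, φ => ∀ᵐ x ∂μ, φ x = 1
  | (k + 1), φ => ∀ g : G, PhasePoly T μ k (fun x => φ (T g x) * (φ x)⁻¹)

/-- The action `T` of `G` on `(X, μ)` is ergodic: every measurable set that is invariant
modulo null sets under every `T g` has measure `0` or `1`. -/
def IsErgodicAction {G X : Type*} [MeasurableSpace X] (T : G → X → X)
    (μ : Measure X) : Prop :=
  ∀ A : Set X, MeasurableSet A → (∀ g : G, μ ((T g ⁻¹' A) ∆ A) = 0) → μ A = 0 ∨ μ A = 1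

theorem Nat.sum_range_choose_eq_choose_add_one (n m : ℕ) :
    ∑ t ∈ Finset.range n, t.choose m = n.choose (m + 1) := by
  induction n with
  | zero => simp
  | succ n ih => rw [Finset.sum_range_succ, ih, Nat.choose_succ_succ, add_comm]

theorem Nat.Coprime.dvd_choose_add_one {n m : ℕ} (h : n.Coprime (m + 1)) :
    n ∣ n.choose (m + 1) := by
  cases n with
  | zero => simp
  | succ s => exact h.dvd_of_dvd_mul_right ⟨s.choose m, (Nat.add_one_mul_choose_eq s m).symm⟩

theorem Finset.prod_range_prod_pow_choose {M : Type*} [CommMonoid M] (a : ℕ → M) (n k : ℕ) :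
    ∏ t ∈ range n, ∏ m ∈ range k, a m ^ t.choose m = ∏ m ∈ range k, a m ^ n.choose (m + 1) := by
  rw [prod_comm]
  refine prod_congr rfl fun m _ => ?_
  rw [prod_pow_eq_pow_sum, Nat.sum_range_choose_eq_choose_add_one]

theorem Finset.prod_pow_choose_mul_prod_pow_choose {M : Type*} [CommMonoid M] (a : ℕ → M)
    (k t : ℕ) :
    (∏ m ∈ range k, a (m + 1) ^ t.choose m) * ∏ m ∈ range (k + 1), a m ^ t.choose m
      = ∏ m ∈ range (k + 1), a m ^ (t + 1).choose m := by
  have pascal : ∀ m, a (m + 1) ^ (t + 1).choose (m + 1)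
      = a (m + 1) ^ t.choose m * a (m + 1) ^ t.choose (m + 1) := fun m => by
    rw [Nat.choose_succ_succ, pow_add]
  rw [prod_range_succ' _ k, prod_range_succ' _ k, prod_congr rfl fun m _ => pascal m,
    prod_mul_distrib]
  simp [mul_assoc]

theorem MeasureTheory.Measure.QuasiMeasurePreserving.ae_forall_iterate {X : Type*}
    [MeasurableSpace X] {μ : Measure X} {S : X → X} (hS : QuasiMeasurePreserving S μ μ)
    {p : X → Prop} (h : ∀ᵐ x ∂μ, p x) : ∀ᵐ x ∂μ, ∀ t, p (S^[t] x) :=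
  ae_all_iff.2 fun t => (hS.iterate t).ae h

section MulDeriv

variable {X H : Type*} [CommGroup H]

def mulDeriv (S : X → X) (φ : X → H) : X → H :=
  fun x => φ (S x) * (φ x)⁻¹

theorem apply_iterate_eq_prod_iterate_mulDeriv_pow_choose (S : X → X) (φ : X → H) (x : X)
    (k : ℕ) (h : ∀ t, ((mulDeriv S)^[k] φ) (S^[t] x) = 1) (t : ℕ) :
    φ (S^[t] x) = ∏ m ∈ Finset.range k, ((mulDeriv S)^[m] φ x) ^ t.choose m := by
  induction k generalizing φ t with
  | zero => simpa using h t
  | succ k ih =>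
    have hD := fun t => ih (mulDeriv S φ) h t
    simp only [← Function.iterate_succ_apply] at hD
    induction t with
    | zero => simp [Finset.prod_range_succ' _ k]
    | succ t iht =>
      have step : φ (S^[t + 1] x) = mulDeriv S φ (S^[t] x) * φ (S^[t] x) := by
        simp [mulDeriv, Function.iterate_succ_apply']
      rw [step, hD t, iht]
      exact Finset.prod_pow_choose_mul_prod_pow_choose (fun m => ((mulDeriv S)^[m] φ) x) k t

theorem ae_pow_iterate_mulDeriv_eq_one [MeasurableSpace X] {μ : Measure X} {S : X → X}
    (hS : Measure.QuasiMeasurePreserving S μ μ) {φ : X → H} {n : ℕ}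
    (h : ∀ᵐ x ∂μ, φ x ^ n = 1) (m : ℕ) : ∀ᵐ x ∂μ, ((mulDeriv S)^[m] φ) x ^ n = 1 := by
  induction m with
  | zero => simpa using h
  | succ m ih =>
    filter_upwards [ih, hS.ae ih] with x hx hSx
    rw [Function.iterate_succ_apply']
    simp [mulDeriv, mul_pow, hx, hSx]

theorem PhasePoly.ae_iterate_mulDeriv_eq_one {G : Type*} [MeasurableSpace X] {T : G → X → X}
    {μ : Measure X} {k : ℕ} {φ : X → H} (hφ : PhasePoly T μ k φ) (g : G) :
    ∀ᵐ x ∂μ, ((mulDeriv (T g))^[k] φ) x = 1 := by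
  induction k generalizing φ with
  | zero => exact hφ
  | succ k ih => exact ih (hφ g)

end MulDeriv

theorem phase_polynomial_line_cocycle_general
    {I : Type*} (q : I → ℕ)
    {X : Type*} [MeasurableSpace X] (μ : Measure X)
    (T : (Π₀ i : I, ZMod (q i)) → X → X)
    (hT : ∀ g, MeasurePreserving (T g) μ μ)
    (k : ℕ) (F : X → Circle)
    (hFpoly : PhasePoly T μ k F)
    (j : ℕ) (pr : Fin j → ℕ) (hpr : ∀ i, (pr i).Prime)
    (hbig : ∀ i, k < pr i)
    (n : ℕ) (hn : n = ∏ i, pr i)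
    (hval : ∀ᵐ x ∂μ, F x ^ n = 1) :
    ∀ g, ∀ᵐ x ∂μ, ∏ t ∈ Finset.range n, F ((T g)^[t] x) = 1 := by
  intro g
  have hS := (hT g).quasiMeasurePreserving
  have hdvd : ∀ m < k, n ∣ n.choose (m + 1) := fun m hm =>
    Nat.Coprime.dvd_choose_add_one <| hn ▸ Nat.Coprime.prod_left fun i _ =>
      Nat.coprime_of_lt_prime m.succ_ne_zero ((Nat.succ_le_of_lt hm).trans_lt (hbig i)) (hpr i)
  filter_upwards [hS.ae_forall_iterate (hFpoly.ae_iterate_mulDeriv_eq_one g),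
    ae_all_iff.2 (ae_pow_iterate_mulDeriv_eq_one hS hval)] with x hx hpow
  rw [Finset.prod_congr rfl fun t _ =>
      apply_iterate_eq_prod_iterate_mulDeriv_pow_choose (T g) F x k hx t,
    Finset.prod_range_prod_pow_choose]
  refine Finset.prod_eq_one fun m hm => ?_
  obtain ⟨c, hc⟩ := hdvd m (Finset.mem_range.1 hm)
  rw [hc, pow_mul, hpow m, one_pow]

/-- Let `G = ⨁_{i∈I} ℤ/q_iℤ` for a countable family of primes `(q_i)`,
let `X` be an ergodic `G`-system and `F : X → S¹` a phase polynomial of degree `< k`.  Let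
`n = p₁ ⋯ p_j` be a product of `j` distinct primes, each strictly greater than `k`, and
suppose `F(x)^n = 1` a.e.  Then for every `g ∈ G`, `∏_{t=0}^{n-1} F(T_g^t x) = 1` a.e. -/
theorem phase_polynomial_line_cocycle
    {I : Type*} [Countable I] (q : I → ℕ) (hq : ∀ i, (q i).Prime)
    {X : Type*} [MeasurableSpace X] (μ : Measure X) [IsProbabilityMeasure μ]
    (T : (Π₀ i : I, ZMod (q i)) → X → X)
    (hT : ∀ g, MeasurePreserving (T g) μ μ)
    (hT0 : T 0 = id) (hTadd : ∀ g g', T (g + g') = T g ∘ T g')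
    (herg : IsErgodicAction T μ)
    (k : ℕ) (F : X → Circle) (hFmeas : Measurable F)
    (hFpoly : PhasePoly T μ k F)
    (j : ℕ) (pr : Fin j → ℕ) (hpr : ∀ i, (pr i).Prime)
    (hdist : Function.Injective pr) (hbig : ∀ i, k < pr i)
    (n : ℕ) (hn : n = ∏ i, pr i)
    (hval : ∀ᵐ x ∂μ, F x ^ n = 1) :
    ∀ g, ∀ᵐ x ∂μ, ∏ t ∈ Finset.range n, F ((T g)^[t] x) = 1 :=
  phase_polynomial_line_cocycle_general q μ T hT k F hFpoly j pr hpr hbig n hn hval
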